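/- arXiv:1511.01311 — 3 statements merged into one kernel-verified Lean document; each statement's English description precedes it below -/
import Mathlib

section
/- For each natural number L, the formal power series identity Σ_{L=0}^∞ (2L+1) · ((L+1)λ^L + Lλ^{L+1})/(1-λ²)³ = 1/(1-λ)⁶ holds. -/
/-- `Σ_{L=0}^∞ (2L+1) ((L+1)λ^L + Lλ^{L+1}) / (1-λ²)³ = 1/(1-λ)⁶` for `|λ| < 1`. -/
theorem sum_two_vectors (lam : ℝ) (h : |lam| < 1) :
    ∑' L : ℕ, (2 * (L : ℝ) + 1) *
        (((L : ℝ) + 1) * lam ^ L + (L : ℝ) * lam ^ (L + 1)) / (1 - lam ^ 2) ^ 3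
      = 1 / (1 - lam) ^ 6 := by
  have hr : ‖lam‖ < 1 := by rwa [Real.norm_eq_abs]
  have hne : (1 : ℝ) - lam ≠ 0 := by
    have : lam < 1 := lt_of_abs_lt h
    linarith
  have hpe : (1 : ℝ) + lam ≠ 0 := by
    have : -1 < lam := neg_lt_of_abs_lt h
    linarith
  have h2 := hasSum_choose_mul_geometric_of_norm_lt_one (𝕜 := ℝ) 2 hr
  have h1 := hasSum_choose_mul_geometric_of_norm_lt_one (𝕜 := ℝ) 1 hr
  have h0 := hasSum_choose_mul_geometric_of_norm_lt_one (𝕜 := ℝ) 0 hr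
  have key : HasSum (fun L : ℕ => (2 * (L : ℝ) + 1) *
      (((L : ℝ) + 1) * lam ^ L + (L : ℝ) * lam ^ (L + 1)))
      ((4 * (1 / (1 - lam) ^ 3) - 3 * (1 / (1 - lam) ^ 2)) +
        lam * ((4 * (1 / (1 - lam) ^ 3) - 5 * (1 / (1 - lam) ^ 2)) + 1 / (1 - lam) ^ 1)) := by
    have H := ((h2.mul_left 4).sub (h1.mul_left 3)).add
      ((((h2.mul_left 4).sub (h1.mul_left 5)).add h0).mul_left lam)
    refine H.congr_fun fun n => ?_
    have c2 : (((n + 2).choose 2 : ℕ) : ℝ) = ((n : ℝ) + 2) * ((n : ℝ) + 1) / 2 := by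
      rw [Nat.cast_choose_two]; push_cast; ring
    have c1 : (((n + 1).choose 1 : ℕ) : ℝ) = (n : ℝ) + 1 := by
      rw [Nat.choose_one_right]; push_cast; ring
    have c0 : (((n + 0).choose 0 : ℕ) : ℝ) = 1 := by simp
    simp only [c2, c1, c0]
    ring
  have hsplit : ∀ L : ℕ, (2 * (L : ℝ) + 1) *
      (((L : ℝ) + 1) * lam ^ L + (L : ℝ) * lam ^ (L + 1)) / (1 - lam ^ 2) ^ 3
      = (2 * (L : ℝ) + 1) *
        (((L : ℝ) + 1) * lam ^ L + (L : ℝ) * lam ^ (L + 1)) / (1 - lam ^ 2) ^ 3 :=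
    fun _ => rfl
  rw [show (fun L : ℕ => (2 * (L : ℝ) + 1) *
      (((L : ℝ) + 1) * lam ^ L + (L : ℝ) * lam ^ (L + 1)) / (1 - lam ^ 2) ^ 3) =
      fun L : ℕ => (2 * (L : ℝ) + 1) *
      (((L : ℝ) + 1) * lam ^ L + (L : ℝ) * lam ^ (L + 1)) / (1 - lam ^ 2) ^ 3 from rfl,
    tsum_div_const, key.tsum_eq]
  have hS : (4 * (1 / (1 - lam) ^ 3) - 3 * (1 / (1 - lam) ^ 2)) +
      lam * ((4 * (1 / (1 - lam) ^ 3) - 5 * (1 / (1 - lam) ^ 2)) + 1 / (1 - lam) ^ 1)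
      = (1 + lam) ^ 3 / (1 - lam) ^ 3 := by
    field_simp
    ring
  rw [hS, show (1 : ℝ) - lam ^ 2 = (1 - lam) * (1 + lam) by ring]
  rw [mul_pow, div_div, div_eq_div_iff (by positivity) (by positivity)]
  ring
end

section
/- The coupling identity for SO(3) generating functions holds: for g_N(L;λ) defined by g₁(L;λ) = λ^L/(1-λ²) and g₂(L;λ) = ((L+1)λ^L + Lλ^{L+1})/(1-λ²)³, one has g₂(L;λ) = Σ_{L_A ≥ 0} Σ_{L_B = |L - L_A|}^{L_A + L} g₁(L_A;λ) g₁(L_B;λ). -/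
/-- Coupling identity: `g₂(L;λ) = Σ_{L_A ≥ 0} Σ_{L_B = |L - L_A|}^{L_A + L} g₁(L_A;λ) g₁(L_B;λ)`
where `g₁(L;λ) = λ^L/(1-λ²)` and `g₂(L;λ) = ((L+1)λ^L + Lλ^{L+1})/(1-λ²)³`. -/
theorem coupling_two_vectors (L : ℕ) (lam : ℝ) (h : |lam| < 1) :
    ∑' L_A : ℕ, ∑ L_B ∈ Finset.Icc (Nat.dist L L_A) (L_A + L),
        (lam ^ L_A / (1 - lam ^ 2)) * (lam ^ L_B / (1 - lam ^ 2))
      = (((L : ℝ) + 1) * lam ^ L + (L : ℝ) * lam ^ (L + 1)) / (1 - lam ^ 2) ^ 3 := by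
  have hlt1 : lam < 1 := (abs_lt.mp h).2
  have hne1 : lam ≠ 1 := ne_of_lt hlt1
  have h1 : (1 : ℝ) - lam ≠ 0 := sub_ne_zero.mpr (ne_of_gt (by linarith))
  have hsq : |lam ^ 2| < 1 := by
    rw [abs_pow]
    exact pow_lt_one₀ (abs_nonneg _) h (by norm_num)
  have ha : (1 : ℝ) - lam ^ 2 ≠ 0 := by
    have : lam ^ 2 < 1 := lt_of_abs_lt hsq
    linarith
  have h1' : lam - 1 ≠ 0 := sub_ne_zero.mpr hne1
  set c : ℝ := 1 / ((1 - lam) * (1 - lam ^ 2) ^ 2) with hc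
  set f1 : ℕ → ℝ := fun n => lam ^ (n + Nat.dist L n) * c with hf1
  set f2 : ℕ → ℝ := fun n => lam ^ (2 * n + L + 1) * c with hf2
  -- rewrite the inner sum
  have key : ∀ L_A : ℕ, ∑ L_B ∈ Finset.Icc (Nat.dist L L_A) (L_A + L),
      (lam ^ L_A / (1 - lam ^ 2)) * (lam ^ L_B / (1 - lam ^ 2))
      = f1 L_A - f2 L_A := by
    intro n
    have hd : Nat.dist L n ≤ n + L := by
      simp only [Nat.dist]; omega
    have hIcc : Finset.Icc (Nat.dist L n) (n + L) = Finset.Ico (Nat.dist L n) (n + L + 1) :=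
      (Finset.Ico_add_one_right_eq_Icc _ _).symm
    have step : ∑ L_B ∈ Finset.Ico (Nat.dist L n) (n + L + 1),
        (lam ^ n / (1 - lam ^ 2)) * (lam ^ L_B / (1 - lam ^ 2))
        = (lam ^ n / (1 - lam ^ 2) ^ 2) * ∑ L_B ∈ Finset.Ico (Nat.dist L n) (n + L + 1), lam ^ L_B := by
      rw [Finset.mul_sum]
      exact Finset.sum_congr rfl (fun i _ => by rw [div_mul_div_comm, sq, div_mul_eq_mul_div, sq])
    rw [hIcc, step, geom_sum_Ico hne1 (by omega)]
    simp only [hf1, hf2, hc]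
    rw [show n + Nat.dist L n = Nat.dist L n + n from by omega, pow_add,
      show 2 * n + L + 1 = (n + L + 1) + n from by omega, pow_add]
    field_simp
    ring
  rw [tsum_congr key]
  -- summability
  have hshift1 : (fun n => f1 (n + L)) = fun n => (lam ^ 2) ^ n * (lam ^ L * c) := by
    funext n
    have hd : Nat.dist L (n + L) = n := by simp only [Nat.dist]; omega
    simp only [hf1, hd]
    rw [show n + L + n = 2 * n + L from by omega, pow_add, pow_mul]
    ring
  have hs1 : Summable f1 := by
    rw [← summable_nat_add_iff L, hshift1]
    exact (summable_geometric_of_abs_lt_one hsq).mul_right _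
  have hshift2 : f2 = fun n => (lam ^ 2) ^ n * (lam ^ (L + 1) * c) := by
    funext n
    simp only [hf2]
    rw [show 2 * n + L + 1 = 2 * n + (L + 1) from by omega, pow_add, pow_mul]
    ring
  have hs2 : Summable f2 := by
    rw [hshift2]
    exact (summable_geometric_of_abs_lt_one hsq).mul_right _
  rw [Summable.tsum_sub hs1 hs2]
  -- compute tsum f2
  have ht2 : ∑' n, f2 n = (1 - lam ^ 2)⁻¹ * (lam ^ (L + 1) * c) := by
    rw [hshift2, tsum_mul_right, tsum_geometric_of_abs_lt_one hsq]
  -- compute tsum f1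
  have ht1 : ∑' n, f1 n = (L : ℝ) * (lam ^ L * c) + (1 - lam ^ 2)⁻¹ * (lam ^ L * c) := by
    rw [← Summable.sum_add_tsum_nat_add L hs1, hshift1, tsum_mul_right,
      tsum_geometric_of_abs_lt_one hsq]
    congr 1
    have : ∀ n ∈ Finset.range L, f1 n = lam ^ L * c := by
      intro n hn
      have hn' : n < L := Finset.mem_range.mp hn
      have hd : Nat.dist L n = L - n := by simp only [Nat.dist]; omega
      simp only [hf1, hd]
      congr 2
      omega
    rw [Finset.sum_congr rfl this, Finset.sum_const, Finset.card_range, nsmul_eq_mul]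
  rw [ht1, ht2, hc, pow_succ]
  field_simp
  ring
end

section
/- Coupling the one-vector and two-vector generating functions gives the three-vector generating function: Σ_{L_A ≥ 0} Σ_{L_B = |L-L_A|}^{L_A+L} (λ^{L_A}/(1-λ²)) · ((L_B+1)λ^{L_B} + L_B λ^{L_B+1})/(1-λ²)³ = [ (L+2)(L+1)/2 · λ^L + (L+2)L λ^{L+1} - (L+1)(L-1) λ^{L+3} - L(L-1)/2 · λ^{L+4} ] / (1-λ²)⁶. -/
private noncomputable def ctvD (lam : ℝ) : ℝ := (1 - lam ^ 2) ^ 4 * (1 - lam) ^ 2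

private noncomputable def ctvF1 (L : ℕ) (lam : ℝ) (n : ℕ) : ℝ :=
  ((lam ^ (L + 3) - lam ^ (L + 1)) * (n : ℝ)
    + ((L : ℝ) * lam ^ (L + 3) - ((L : ℝ) + 2) * lam ^ (L + 1))) * (lam ^ 2) ^ n / ctvD lam

private noncomputable def ctvF2 (L : ℕ) (lam : ℝ) (n : ℕ) : ℝ :=
  (((Nat.dist L n : ℝ) + 1) * lam ^ (n + Nat.dist L n)
    - ((Nat.dist L n : ℝ) - 1) * lam ^ (n + Nat.dist L n + 2)) / ctvD lam

private lemma gauss_sum_real (n : ℕ) :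
    ∑ k ∈ Finset.range n, (k : ℝ) = (n : ℝ) * ((n : ℝ) - 1) / 2 := by
  induction n with
  | zero => norm_num
  | succ m ih =>
    rw [Finset.sum_range_succ, ih]
    push_cast
    ring

private lemma range_sum_P (x : ℝ) (hx : (1 : ℝ) - x ≠ 0) (N : ℕ) :
    ∑ n ∈ Finset.range N, (((n : ℝ) + 1) * x ^ n + (n : ℝ) * x ^ (n + 1))
      = (1 + x ^ 2 - ((N : ℝ) + 1) * x ^ N + ((N : ℝ) - 1) * x ^ (N + 2)) / (1 - x) ^ 2 := by
  induction N with
  | zero =>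
    rw [Finset.sum_range_zero]
    push_cast
    rw [eq_div_iff (pow_ne_zero 2 hx)]
    ring
  | succ m ih =>
    rw [Finset.sum_range_succ, ih]
    push_cast
    rw [div_add' _ _ _ (pow_ne_zero 2 hx), div_eq_div_iff (pow_ne_zero 2 hx) (pow_ne_zero 2 hx)]
    ring

/-- Coupling the one-vector and two-vector generating functions gives the
three-vector generating function. -/
theorem coupling_three_vectors (L : ℕ) (lam : ℝ) (h : |lam| < 1) :
    ∑' L_A : ℕ, ∑ L_B ∈ Finset.Icc (Nat.dist L L_A) (L_A + L),
        (lam ^ L_A / (1 - lam ^ 2)) *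
          ((((L_B : ℝ) + 1) * lam ^ L_B + (L_B : ℝ) * lam ^ (L_B + 1)) / (1 - lam ^ 2) ^ 3)
      = (((L : ℝ) + 2) * ((L : ℝ) + 1) / 2 * lam ^ L
          + ((L : ℝ) + 2) * (L : ℝ) * lam ^ (L + 1)
          - ((L : ℝ) + 1) * ((L : ℝ) - 1) * lam ^ (L + 3)
          - (L : ℝ) * ((L : ℝ) - 1) / 2 * lam ^ (L + 4)) / (1 - lam ^ 2) ^ 6 := by
  obtain ⟨hlt1, hlt2⟩ := abs_lt.mp h
  have h1m : (1 : ℝ) - lam ≠ 0 := by nlinarith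
  have h1p : (1 : ℝ) + lam ≠ 0 := by nlinarith
  have h1sq : (1 : ℝ) - lam ^ 2 ≠ 0 := by
    intro hc
    have : (1 - lam) * (1 + lam) = 0 := by nlinarith
    rcases mul_eq_zero.mp this with h' | h' <;> [exact h1m h'; exact h1p h']
  have hynorm : ‖lam ^ 2‖ < 1 := by
    rw [Real.norm_eq_abs, abs_pow]
    exact pow_lt_one₀ (abs_nonneg _) h two_ne_zero
  -- pointwise identity for the summand
  have hsummand : ∀ n : ℕ,
      (∑ L_B ∈ Finset.Icc (Nat.dist L n) (n + L),
        (lam ^ n / (1 - lam ^ 2)) *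
          ((((L_B : ℝ) + 1) * lam ^ L_B + (L_B : ℝ) * lam ^ (L_B + 1)) / (1 - lam ^ 2) ^ 3))
      = ctvF1 L lam n + ctvF2 L lam n := by
    intro n
    have hab : Nat.dist L n ≤ n + L + 1 := by simp [Nat.dist]; omega
    have key : ∀ N : ℕ,
        ∑ L_B ∈ Finset.range N,
          (lam ^ n / (1 - lam ^ 2)) *
            ((((L_B : ℝ) + 1) * lam ^ L_B + (L_B : ℝ) * lam ^ (L_B + 1)) / (1 - lam ^ 2) ^ 3)
        = (lam ^ n / (1 - lam ^ 2) ^ 4) *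
            ((1 + lam ^ 2 - ((N : ℝ) + 1) * lam ^ N + ((N : ℝ) - 1) * lam ^ (N + 2))
              / (1 - lam) ^ 2) := by
      intro N
      rw [← range_sum_P lam h1m N, Finset.mul_sum]
      refine Finset.sum_congr rfl fun k _ => ?_
      field_simp
    rw [← Finset.Ico_add_one_right_eq_Icc, Finset.sum_Ico_eq_sub _ hab, key, key]
    simp only [ctvF1, ctvF2, ctvD]
    push_cast
    field_simp
    ring
  -- summability facts
  have hgeo : Summable (fun n : ℕ => (lam ^ 2) ^ n) := summable_geometric_of_norm_lt_one hynorm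
  have hmul : Summable (fun n : ℕ => (n : ℝ) * (lam ^ 2) ^ n) :=
    (hasSum_coe_mul_geometric_of_norm_lt_one hynorm).summable
  have hyt1 : ∑' n : ℕ, (n : ℝ) * (lam ^ 2) ^ n = lam ^ 2 / (1 - lam ^ 2) ^ 2 :=
    tsum_coe_mul_geometric_of_norm_lt_one hynorm
  have hyt0 : ∑' n : ℕ, (lam ^ 2) ^ n = (1 - lam ^ 2)⁻¹ := tsum_geometric_of_norm_lt_one hynorm
  have he1 : (fun n : ℕ => ctvF1 L lam n)
      = fun n : ℕ => ((lam ^ (L + 3) - lam ^ (L + 1)) / ctvD lam) * ((n : ℝ) * (lam ^ 2) ^ n)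
          + (((L : ℝ) * lam ^ (L + 3) - ((L : ℝ) + 2) * lam ^ (L + 1)) / ctvD lam)
            * (lam ^ 2) ^ n := by
    funext n
    simp only [ctvF1]
    ring
  have hf1 : Summable (ctvF1 L lam) := by
    rw [show ctvF1 L lam = fun n => ctvF1 L lam n from rfl, he1]
    exact (hmul.mul_left _).add (hgeo.mul_left _)
  have ht1 : ∑' n, ctvF1 L lam n
      = ((lam ^ (L + 3) - lam ^ (L + 1)) / ctvD lam) * (lam ^ 2 / (1 - lam ^ 2) ^ 2)
        + (((L : ℝ) * lam ^ (L + 3) - ((L : ℝ) + 2) * lam ^ (L + 1)) / ctvD lam)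
          * (1 - lam ^ 2)⁻¹ := by
    rw [show (∑' n, ctvF1 L lam n) = ∑' n, (fun m : ℕ => ctvF1 L lam m) n from rfl]
    rw [he1, Summable.tsum_add (hmul.mul_left _) (hgeo.mul_left _), tsum_mul_left, tsum_mul_left,
      hyt1, hyt0]
  have he2 : (fun n : ℕ => ctvF2 L lam (n + L))
      = fun n : ℕ => ((lam ^ L - lam ^ (L + 2)) / ctvD lam) * ((n : ℝ) * (lam ^ 2) ^ n)
          + ((lam ^ L + lam ^ (L + 2)) / ctvD lam) * (lam ^ 2) ^ n := by
    funext n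
    have hd : Nat.dist L (n + L) = n := by simp [Nat.dist]
    simp only [ctvF2, hd]
    ring
  have hf2s : Summable (fun n : ℕ => ctvF2 L lam (n + L)) := by
    rw [he2]
    exact (hmul.mul_left _).add (hgeo.mul_left _)
  have hf2 : Summable (ctvF2 L lam) := (summable_nat_add_iff L).mp hf2s
  have htail : ∑' n : ℕ, ctvF2 L lam (n + L)
      = ((lam ^ L - lam ^ (L + 2)) / ctvD lam) * (lam ^ 2 / (1 - lam ^ 2) ^ 2)
        + ((lam ^ L + lam ^ (L + 2)) / ctvD lam) * (1 - lam ^ 2)⁻¹ := by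
    rw [show (∑' n : ℕ, ctvF2 L lam (n + L)) = ∑' n, (fun m : ℕ => ctvF2 L lam (m + L)) n from
      rfl]
    rw [he2, Summable.tsum_add (hmul.mul_left _) (hgeo.mul_left _), tsum_mul_left, tsum_mul_left,
      hyt1, hyt0]
  have hfin : ∑ k ∈ Finset.range L, ctvF2 L lam k
      = ((lam ^ L - lam ^ (L + 2)) / ctvD lam) * ((L : ℝ) * ((L : ℝ) + 1) / 2)
        + ((lam ^ L + lam ^ (L + 2)) / ctvD lam) * (L : ℝ) := by
    have hterm : ∀ k ∈ Finset.range L, ctvF2 L lam k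
        = ((lam ^ L - lam ^ (L + 2)) / ctvD lam) * ((L : ℝ) - (k : ℝ))
          + ((lam ^ L + lam ^ (L + 2)) / ctvD lam) := by
      intro k hk
      have hkL : k ≤ L := (Finset.mem_range.mp hk).le
      have hd : Nat.dist L k = L - k := by simp [Nat.dist]; omega
      have hek : k + Nat.dist L k = L := by rw [hd]; omega
      simp only [ctvF2]
      rw [hek, hd, Nat.cast_sub hkL]
      ring
    rw [Finset.sum_congr rfl hterm, Finset.sum_add_distrib, Finset.sum_const,
      ← Finset.mul_sum, Finset.sum_sub_distrib, Finset.sum_const, gauss_sum_real]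
    simp only [nsmul_eq_mul, Finset.card_range]
    ring
  have ht2 : ∑' n, ctvF2 L lam n
      = ((lam ^ L - lam ^ (L + 2)) / ctvD lam) * ((L : ℝ) * ((L : ℝ) + 1) / 2)
        + ((lam ^ L + lam ^ (L + 2)) / ctvD lam) * (L : ℝ)
        + (((lam ^ L - lam ^ (L + 2)) / ctvD lam) * (lam ^ 2 / (1 - lam ^ 2) ^ 2)
          + ((lam ^ L + lam ^ (L + 2)) / ctvD lam) * (1 - lam ^ 2)⁻¹) := by
    rw [← Summable.sum_add_tsum_nat_add L hf2, hfin, htail]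
  rw [tsum_congr hsummand, Summable.tsum_add hf1 hf2, ht1, ht2]
  simp only [ctvD]
  field_simp
  ring
end
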